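/- arXiv:2306.14166 — 3 statements merged into one kernel-verified Lean document; each statement's English description precedes it below -/
import Mathlib

section
/- The integral I₁ := ∫_{−∞}^{∞} [ e^{−y²}/(√π · erfc(y)) − χ_{(0,∞)}(y) · ( y + y/(2(1+y²)) ) ] dy converges and equals (1/2) log(2√π). -/
/-!
Write `T y = ∫_y^∞ e^{-t²} dt`, so that `√π erfc y = 2 T y` and the first term of the integrand is
the hazard rate `H = e^{-y²} / (2 T) = (-½ log (2 T))'`. On `(-∞, 0]` the integral is therefore
`½ log (2 T (-∞)) - ½ log (2 T 0) = ½ log 2`. On `(0, ∞)` the integrand is the derivative of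
`G y = -½ log (2 T y) - y²/2 - ¼ log (1 + y²)`, and `G 0 = -½ log √π`.

Everything else comes from the bounds `y + y / (2 (1 + y²)) ≤ H y ≤ (1 + y²) / y` for `y > 0`:
the lower one makes the integrand nonnegative on `(0, ∞)`, so `G` increases to its limit, and
together they give `H y / √(1 + y²) → 1`, which is `G → 0`. Both bounds compare `2 T` with
`e^{-y²} r`: as `(e^{-y²} r - 2 T)' = e^{-y²} (r' - 2 y r + 2)` and both terms vanish at `∞`,
the sign of `r' - 2 y r + 2` decides the comparison; take `r = 1 / (y + y / (2 (1 + y²)))` and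
`r = y / (1 + y²)`.
-/

open Real MeasureTheory Set

/-- The complementary error function `erfc(y) = (2/√π) ∫_y^∞ e^{-t²} dt`. -/
noncomputable def erfc (y : ℝ) : ℝ :=
  (2 / Real.sqrt π) * ∫ t in Set.Ioi y, Real.exp (-t ^ 2)

open Filter Topology

theorem nonneg_of_hasDerivAt_nonpos_of_tendsto_zero {g g' : ℝ → ℝ} {a x : ℝ}
    (hg : ∀ y ∈ Ioi a, HasDerivAt g (g' y) y) (hg' : ∀ y ∈ Ioi a, g' y ≤ 0)
    (hlim : Tendsto g atTop (𝓝 0)) (hx : a < x) : 0 ≤ g x := by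
  have hanti : AntitoneOn g (Ioi a) :=
    antitoneOn_of_hasDerivWithinAt_nonpos (convex_Ioi a)
      (fun y hy => (hg y hy).continuousAt.continuousWithinAt)
      (fun y hy => (hg y (interior_subset hy)).hasDerivWithinAt)
      (fun y hy => hg' y (interior_subset hy))
  exact le_of_tendsto hlim <| (eventually_ge_atTop x).mono fun y hy =>
    hanti hx (hx.trans_le hy) hy

theorem integrable_exp_neg_sq : Integrable fun t : ℝ => exp (-t ^ 2) := by
  simpa using integrable_exp_neg_mul_sq one_pos

theorem integral_exp_neg_sq : ∫ t : ℝ, exp (-t ^ 2) = √π := by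
  simpa using integral_gaussian 1

noncomputable def gaussTail (y : ℝ) : ℝ := ∫ t in Ioi y, exp (-t ^ 2)

theorem gaussTail_pos (y : ℝ) : 0 < gaussTail y := by
  rw [gaussTail, setIntegral_pos_iff_support_of_nonneg_ae
    (.of_forall fun t => (exp_pos _).le) integrable_exp_neg_sq.integrableOn]
  simp [Function.support, exp_ne_zero]

theorem gaussTail_zero : gaussTail 0 = √π / 2 := by
  simpa [gaussTail] using integral_gaussian_Ioi 1

theorem gaussTail_eq_sub_intervalIntegral (y : ℝ) :
    gaussTail y = √π / 2 - ∫ t in (0 : ℝ)..y, exp (-t ^ 2) := by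
  rw [← gaussTail_zero, gaussTail, gaussTail, ← intervalIntegral.integral_interval_add_Ioi
    integrable_exp_neg_sq.integrableOn integrable_exp_neg_sq.integrableOn,
    intervalIntegral.integral_symm]
  ring

theorem hasDerivAt_gaussTail (y : ℝ) : HasDerivAt gaussTail (-exp (-y ^ 2)) y := by
  have hcont : Continuous fun t : ℝ => exp (-t ^ 2) := by fun_prop
  rw [funext gaussTail_eq_sub_intervalIntegral]
  exact (hcont.integral_hasStrictDerivAt 0 y).hasDerivAt.const_sub _

theorem continuous_gaussTail : Continuous gaussTail :=
  continuous_iff_continuousAt.2 fun y => (hasDerivAt_gaussTail y).continuousAt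

theorem tendsto_gaussTail_atTop : Tendsto gaussTail atTop (𝓝 0) :=
  tendsto_integral_Ioi_zero tendsto_id

theorem tendsto_gaussTail_atBot : Tendsto gaussTail atBot (𝓝 √π) := by
  have h := (tendsto_integral_Iic_zero (f := fun t : ℝ => exp (-t ^ 2)) (μ := volume)
    tendsto_id).const_sub √π
  rw [sub_zero] at h
  refine h.congr fun y => ?_
  rw [← integral_exp_neg_sq, ← intervalIntegral.integral_Iic_add_Ioi (b := y)
    integrable_exp_neg_sq.integrableOn integrable_exp_neg_sq.integrableOn, gaussTail]
  simp

theorem sqrt_pi_le_two_gaussTail {y : ℝ} (hy : y ≤ 0) : √π ≤ 2 * gaussTail y := by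
  rw [gaussTail_eq_sub_intervalIntegral, intervalIntegral.integral_symm]
  have := intervalIntegral.integral_nonneg (μ := volume) hy fun t _ => (exp_pos (-t ^ 2)).le
  linarith

theorem sqrt_pi_mul_erfc (y : ℝ) : √π * erfc y = 2 * gaussTail y := by
  have : √π ≠ 0 := (sqrt_pos.2 pi_pos).ne'
  rw [erfc, gaussTail]
  field_simp

theorem hasDerivAt_exp_mul_sub_two_gaussTail {r : ℝ → ℝ} {r' y : ℝ} (hr : HasDerivAt r r' y) :
    HasDerivAt (fun y => exp (-y ^ 2) * r y - 2 * gaussTail y)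
      (exp (-y ^ 2) * (r' - 2 * y * r y + 2)) y := by
  have he : HasDerivAt (fun y : ℝ => exp (-y ^ 2)) (exp (-y ^ 2) * -(2 * y)) y := by
    simpa using ((hasDerivAt_pow 2 y).neg).exp
  exact ((he.fun_mul hr).fun_sub ((hasDerivAt_gaussTail y).const_mul 2)).congr_deriv (by ring)

theorem tendsto_exp_mul_sub_two_gaussTail {r : ℝ → ℝ} (hr : Tendsto r atTop (𝓝 0)) :
    Tendsto (fun y => exp (-y ^ 2) * r y - 2 * gaussTail y) atTop (𝓝 0) := by
  have he : Tendsto (fun y : ℝ => exp (-y ^ 2)) atTop (𝓝 0) :=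
    tendsto_exp_atBot.comp (tendsto_neg_atTop_atBot.comp (tendsto_pow_atTop two_ne_zero))
  simpa using (he.mul hr).sub (tendsto_gaussTail_atTop.const_mul 2)

theorem two_gaussTail_le_of_hasDerivAt {r r' : ℝ → ℝ} {a y : ℝ}
    (hr : ∀ x ∈ Ioi a, HasDerivAt r (r' x) x) (hr' : ∀ x ∈ Ioi a, r' x - 2 * x * r x + 2 ≤ 0)
    (hlim : Tendsto r atTop (𝓝 0)) (hy : a < y) : 2 * gaussTail y ≤ exp (-y ^ 2) * r y := by
  have := nonneg_of_hasDerivAt_nonpos_of_tendsto_zero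
    (fun x hx => hasDerivAt_exp_mul_sub_two_gaussTail (hr x hx))
    (fun x hx => mul_nonpos_of_nonneg_of_nonpos (exp_pos _).le (hr' x hx))
    (tendsto_exp_mul_sub_two_gaussTail hlim) hy
  linarith

theorem exp_mul_le_two_gaussTail_of_hasDerivAt {r r' : ℝ → ℝ} {a y : ℝ}
    (hr : ∀ x ∈ Ioi a, HasDerivAt r (r' x) x) (hr' : ∀ x ∈ Ioi a, 0 ≤ r' x - 2 * x * r x + 2)
    (hlim : Tendsto r atTop (𝓝 0)) (hy : a < y) : exp (-y ^ 2) * r y ≤ 2 * gaussTail y := by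
  have hlim' : Tendsto (fun y => -(exp (-y ^ 2) * r y - 2 * gaussTail y)) atTop (𝓝 0) := by
    simpa using (tendsto_exp_mul_sub_two_gaussTail hlim).neg
  have := nonneg_of_hasDerivAt_nonpos_of_tendsto_zero
    (fun x hx => (hasDerivAt_exp_mul_sub_two_gaussTail (hr x hx)).fun_neg)
    (fun x hx => neg_nonpos.2 (mul_nonneg (exp_pos _).le (hr' x hx))) hlim' hy
  linarith

noncomputable def gaussHazard (y : ℝ) : ℝ := exp (-y ^ 2) / (2 * gaussTail y)

noncomputable def hazardApprox (y : ℝ) : ℝ := y + y / (2 * (1 + y ^ 2))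

theorem le_hazardApprox {y : ℝ} (hy : 0 ≤ y) : y ≤ hazardApprox y := by
  unfold hazardApprox
  have : 0 ≤ y / (2 * (1 + y ^ 2)) := by positivity
  linarith

theorem hasDerivAt_hazardApprox (y : ℝ) :
    HasDerivAt hazardApprox (1 + (1 - y ^ 2) / (2 * (1 + y ^ 2) ^ 2)) y := by
  have hden : HasDerivAt (fun y : ℝ => 2 * (1 + y ^ 2)) (2 * (2 * y)) y := by
    simpa using ((hasDerivAt_pow 2 y).const_add 1).const_mul 2
  refine ((hasDerivAt_id' y).add ((hasDerivAt_id' y).div hden (by positivity))).congr_deriv ?_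
  field_simp
  ring

theorem hazardApprox_le_gaussHazard {y : ℝ} (hy : 0 < y) : hazardApprox y ≤ gaussHazard y := by
  have hpos : ∀ x ∈ Ioi (0 : ℝ), 0 < hazardApprox x := fun x hx =>
    (mem_Ioi.1 hx).trans_le (le_hazardApprox hx.le)
  have hlim : Tendsto (fun x => (hazardApprox x)⁻¹) atTop (𝓝 0) :=
    tendsto_inv_atTop_zero.comp <| tendsto_atTop_mono' _
      ((eventually_ge_atTop 0).mono fun x hx => le_hazardApprox hx) tendsto_id
  have hode : ∀ x ∈ Ioi (0 : ℝ), -(1 + (1 - x ^ 2) / (2 * (1 + x ^ 2) ^ 2)) / hazardApprox x ^ 2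
      - 2 * x * (hazardApprox x)⁻¹ + 2 ≤ 0 := by
    intro x hx
    have hx0 := hpos x hx
    have : -(1 + (1 - x ^ 2) / (2 * (1 + x ^ 2) ^ 2)) / hazardApprox x ^ 2
        - 2 * x * (hazardApprox x)⁻¹ + 2 = -3 / (2 * (1 + x ^ 2) ^ 2 * hazardApprox x ^ 2) := by
      field_simp
      unfold hazardApprox
      field_simp
      ring
    rw [this]
    exact div_nonpos_of_nonpos_of_nonneg (by norm_num) (by positivity)
  have := two_gaussTail_le_of_hasDerivAt (r := fun x => (hazardApprox x)⁻¹)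
    (fun x hx => (hasDerivAt_hazardApprox x).inv (hpos x hx).ne') hode hlim hy
  rw [gaussHazard, le_div_iff₀ (by linarith [gaussTail_pos y])]
  rw [← div_eq_mul_inv, le_div_iff₀ (hpos y hy)] at this
  linarith

theorem gaussHazard_le {y : ℝ} (hy : 0 < y) : gaussHazard y ≤ (1 + y ^ 2) / y := by
  have hlim : Tendsto (fun x : ℝ => x / (1 + x ^ 2)) atTop (𝓝 0) := by
    refine tendsto_of_tendsto_of_tendsto_of_le_of_le' tendsto_const_nhds tendsto_inv_atTop_zero
      ((eventually_ge_atTop 0).mono fun x hx => by positivity)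
      ((eventually_gt_atTop 0).mono fun x hx => ?_)
    rw [div_le_iff₀ (by positivity)]
    field_simp
    nlinarith
  have hderiv : ∀ x ∈ Ioi (0 : ℝ),
      HasDerivAt (fun x : ℝ => x / (1 + x ^ 2)) ((1 - x ^ 2) / (1 + x ^ 2) ^ 2) x := by
    intro x _
    have hden : HasDerivAt (fun y : ℝ => 1 + y ^ 2) (2 * x) x := by
      simpa using (hasDerivAt_pow 2 x).const_add 1
    refine ((hasDerivAt_id' x).div hden (by positivity)).congr_deriv ?_
    field_simp
    ring
  have hode : ∀ x ∈ Ioi (0 : ℝ),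
      0 ≤ (1 - x ^ 2) / (1 + x ^ 2) ^ 2 - 2 * x * (x / (1 + x ^ 2)) + 2 := by
    intro x _
    have : (1 - x ^ 2) / (1 + x ^ 2) ^ 2 - 2 * x * (x / (1 + x ^ 2)) + 2
        = (3 + x ^ 2) / (1 + x ^ 2) ^ 2 := by
      field_simp
      ring
    rw [this]
    positivity
  have := exp_mul_le_two_gaussTail_of_hasDerivAt hderiv hode hlim hy
  rw [gaussHazard, div_le_div_iff₀ (by linarith [gaussTail_pos y]) hy]
  rw [mul_div_assoc', div_le_iff₀ (by positivity)] at this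
  linarith

theorem tendsto_gaussHazard_div_sqrt :
    Tendsto (fun y => gaussHazard y / √(1 + y ^ 2)) atTop (𝓝 1) := by
  have hs : Tendsto (fun y : ℝ => √(1 + y ^ 2) / y) atTop (𝓝 1) := by
    have : Tendsto (fun y : ℝ => √(y⁻¹ ^ 2 + 1)) atTop (𝓝 1) := by
      simpa using ((tendsto_inv_atTop_zero.pow 2).add_const 1).sqrt
    refine this.congr' ((eventually_gt_atTop 0).mono fun y hy => ?_)
    show √(y⁻¹ ^ 2 + 1) = √(1 + y ^ 2) / y
    rw [show y⁻¹ ^ 2 + 1 = (1 + y ^ 2) / y ^ 2 by field_simp, sqrt_div' _ (sq_nonneg y),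
      sqrt_sq hy.le]
  refine tendsto_of_tendsto_of_tendsto_of_le_of_le' (by simpa using hs.inv₀ one_ne_zero) hs
    ((eventually_gt_atTop 0).mono fun y hy => ?_) ((eventually_gt_atTop 0).mono fun y hy => ?_)
  · exact div_le_div_of_nonneg_right
      ((le_hazardApprox hy.le).trans (hazardApprox_le_gaussHazard hy)) (sqrt_nonneg _)
  · have hsq : 0 < √(1 + y ^ 2) := sqrt_pos.2 (by positivity)
    calc gaussHazard y / √(1 + y ^ 2) ≤ (1 + y ^ 2) / y / √(1 + y ^ 2) :=
          div_le_div_of_nonneg_right (gaussHazard_le hy) hsq.le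
      _ = √(1 + y ^ 2) / y := by
          field_simp
          rw [sq_sqrt (by positivity)]

theorem hasDerivAt_neg_log_two_gaussTail_div_two (y : ℝ) :
    HasDerivAt (fun y => -log (2 * gaussTail y) / 2) (gaussHazard y) y := by
  have h2I : 2 * gaussTail y ≠ 0 := by linarith [gaussTail_pos y]
  refine ((((hasDerivAt_gaussTail y).const_mul 2).log h2I).neg.div_const 2).congr_deriv ?_
  rw [gaussHazard]
  field_simp

theorem hasDerivAt_hazardApprox_primitive (y : ℝ) :
    HasDerivAt (fun y => y ^ 2 / 2 + log (1 + y ^ 2) / 4) (hazardApprox y) y := by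
  have hq : HasDerivAt (fun y : ℝ => 1 + y ^ 2) (2 * y) y := by
    simpa using (hasDerivAt_pow 2 y).const_add 1
  have hlog := (hq.log (by positivity)).div_const 4
  refine (((hasDerivAt_pow 2 y).div_const 2).add hlog).congr_deriv ?_
  rw [hazardApprox]
  field_simp
  ring

theorem integrableOn_Iic_gaussHazard : IntegrableOn gaussHazard (Iic 0) := by
  have hcont : Continuous gaussHazard :=
    (by fun_prop : Continuous fun y : ℝ => exp (-y ^ 2)).div
      (continuous_const.mul continuous_gaussTail) fun y => by linarith [gaussTail_pos y]
  refine Integrable.mono' (integrable_exp_neg_sq.div_const √π).integrableOn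
    hcont.aestronglyMeasurable.restrict ((ae_restrict_iff' measurableSet_Iic).2 (ae_of_all _ ?_))
  intro y hy
  have h2I := sqrt_pi_le_two_gaussTail hy
  have hpi : 0 < √π := sqrt_pos.2 pi_pos
  rw [gaussHazard, norm_of_nonneg (div_nonneg (exp_pos _).le (hpi.trans_le h2I).le)]
  exact div_le_div_of_nonneg_left (exp_pos _).le hpi h2I

theorem integral_Iic_gaussHazard : ∫ y in Iic 0, gaussHazard y = log 2 / 2 := by
  have hlim : Tendsto (fun y => -log (2 * gaussTail y) / 2) atBot (𝓝 (-log (2 * √π) / 2)) :=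
    (((tendsto_gaussTail_atBot.const_mul 2).log (by positivity)).neg).div_const 2
  rw [integral_Iic_of_hasDerivAt_of_tendsto' (fun y _ => hasDerivAt_neg_log_two_gaussTail_div_two y)
    integrableOn_Iic_gaussHazard hlim, gaussTail_zero, mul_div_cancel₀ _ two_ne_zero,
    log_mul two_ne_zero (sqrt_pos.2 pi_pos).ne']
  ring

noncomputable def hazardSubApproxPrimitive (y : ℝ) : ℝ :=
  -log (2 * gaussTail y) / 2 - (y ^ 2 / 2 + log (1 + y ^ 2) / 4)

theorem hasDerivAt_hazardSubApproxPrimitive (y : ℝ) :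
    HasDerivAt hazardSubApproxPrimitive (gaussHazard y - hazardApprox y) y :=
  (hasDerivAt_neg_log_two_gaussTail_div_two y).sub (hasDerivAt_hazardApprox_primitive y)

theorem hazardSubApproxPrimitive_eq_log (y : ℝ) :
    hazardSubApproxPrimitive y = log (gaussHazard y / √(1 + y ^ 2)) / 2 := by
  have hI := gaussTail_pos y
  rw [hazardSubApproxPrimitive, gaussHazard, log_div (by positivity) (by positivity),
    log_div (by positivity) (by positivity), log_exp, log_sqrt (by positivity)]
  ring

theorem tendsto_hazardSubApproxPrimitive_atTop :
    Tendsto hazardSubApproxPrimitive atTop (𝓝 0) := by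
  have := (tendsto_gaussHazard_div_sqrt.log one_ne_zero).div_const 2
  rw [log_one, zero_div] at this
  exact this.congr fun y => (hazardSubApproxPrimitive_eq_log y).symm

theorem integrableOn_Ioi_gaussHazard_sub_hazardApprox :
    IntegrableOn (fun y => gaussHazard y - hazardApprox y) (Ioi 0) :=
  integrableOn_Ioi_deriv_of_nonneg' (fun y _ => hasDerivAt_hazardSubApproxPrimitive y)
    (fun _ hy => sub_nonneg.2 (hazardApprox_le_gaussHazard hy))
    tendsto_hazardSubApproxPrimitive_atTop

theorem integral_Ioi_gaussHazard_sub_hazardApprox :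
    ∫ y in Ioi 0, gaussHazard y - hazardApprox y = log √π / 2 := by
  rw [integral_Ioi_of_hasDerivAt_of_nonneg' (fun y _ => hasDerivAt_hazardSubApproxPrimitive y)
    (fun _ hy => sub_nonneg.2 (hazardApprox_le_gaussHazard hy))
    tendsto_hazardSubApproxPrimitive_atTop]
  norm_num [hazardSubApproxPrimitive, gaussTail_zero, mul_div_cancel₀, neg_div]

section SplitAtPoint

variable {E : Type*} [NormedAddCommGroup E] {μ : Measure ℝ} {f g : ℝ → E} {a : ℝ}

theorem integrable_sub_indicator_Ioi (hf : IntegrableOn f (Iic a) μ)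
    (hfg : IntegrableOn (fun x => f x - g x) (Ioi a) μ) :
    Integrable (fun x => f x - (Ioi a).indicator g x) μ := by
  rw [← integrableOn_univ, ← Iic_union_Ioi (a := a)]
  refine (hf.congr_fun (fun x hx => ?_) measurableSet_Iic).union
    (hfg.congr_fun (fun x hx => ?_) measurableSet_Ioi)
  · rw [indicator_of_notMem (notMem_Ioi.2 hx), sub_zero]
  · rw [indicator_of_mem hx]

theorem integral_sub_indicator_Ioi [NormedSpace ℝ E] (hf : IntegrableOn f (Iic a) μ)
    (hfg : IntegrableOn (fun x => f x - g x) (Ioi a) μ) :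
    ∫ x, f x - (Ioi a).indicator g x ∂μ = ∫ x in Iic a, f x ∂μ + ∫ x in Ioi a, f x - g x ∂μ := by
  have hi := integrable_sub_indicator_Ioi hf hfg
  rw [← intervalIntegral.integral_Iic_add_Ioi hi.integrableOn hi.integrableOn]
  congr 1
  · refine setIntegral_congr_fun measurableSet_Iic fun x hx => ?_
    rw [indicator_of_notMem (notMem_Ioi.2 hx), sub_zero]
  · exact setIntegral_congr_fun measurableSet_Ioi fun x hx => by rw [indicator_of_mem hx]

end SplitAtPoint

theorem exp_div_sqrt_pi_mul_erfc (y : ℝ) : exp (-y ^ 2) / (√π * erfc y) = gaussHazard y := by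
  rw [sqrt_pi_mul_erfc, gaussHazard]

theorem integral_I1 :
    Integrable (fun y : ℝ => Real.exp (-y ^ 2) / (Real.sqrt π * erfc y) -
      Set.indicator (Set.Ioi (0 : ℝ)) (fun y => y + y / (2 * (1 + y ^ 2))) y) ∧
    (∫ y : ℝ, (Real.exp (-y ^ 2) / (Real.sqrt π * erfc y) -
      Set.indicator (Set.Ioi (0 : ℝ)) (fun y => y + y / (2 * (1 + y ^ 2))) y)) =
      (1 / 2) * Real.log (2 * Real.sqrt π) := by
  simp only [exp_div_sqrt_pi_mul_erfc,
    show (fun y : ℝ => y + y / (2 * (1 + y ^ 2))) = hazardApprox from rfl]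
  have hIic := integrableOn_Iic_gaussHazard
  have hIoi := integrableOn_Ioi_gaussHazard_sub_hazardApprox
  refine ⟨integrable_sub_indicator_Ioi hIic hIoi, ?_⟩
  rw [integral_sub_indicator_Ioi hIic hIoi, integral_Iic_gaussHazard,
    integral_Ioi_gaussHazard_sub_hazardApprox, log_mul two_ne_zero (sqrt_pos.2 pi_pos).ne']
  ring
end

section
/- For every x > 0, ρ(x) := ∫_{−∞}^{∞} e^{−(y+x)²}/(√π erfc(y)) dy → +∞ as x → 0⁺. -/
open Real MeasureTheory Filter

/-- The semi-hard edge density profile. -/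
noncomputable def rhoProfile (x : ℝ) : ℝ :=
  ∫ y : ℝ, Real.exp (-(y + x) ^ 2) / (Real.sqrt π * erfc y)

/-!
The Gaussian tail satisfies `e^{-y²-2}/(2y) ≤ ∫_y^∞ e^{-t²} dt ≤ e^{-y²}/(2y)` for `y ≥ 1`, so
for `y ≥ 1` the integrand of `ρ(x)` is comparable to `y e^{-2xy}`. The upper bound on the tail
makes the integrand at least `e^{-3}` on `[1, 1/x]`, whence `ρ(x) ≥ (1/x - 1) e^{-3}`. The lower
bound makes it `O(e^{-xy})` at `+∞`, so it is integrable for `x > 0`; without this the Bochner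
integral defining `ρ(x)` would be the junk value `0`.
-/

namespace RhoProfile

noncomputable def gaussTail (y : ℝ) : ℝ := ∫ t in Set.Ioi y, exp (-t ^ 2)

lemma integrable_exp_neg_sq : Integrable fun t : ℝ ↦ exp (-t ^ 2) := by
  simpa using integrable_exp_neg_mul_sq one_pos

lemma integrable_mul_exp_neg_sq : Integrable fun t : ℝ ↦ t * exp (-t ^ 2) := by
  simpa using integrable_mul_exp_neg_mul_sq one_pos

lemma integral_Ioi_mul_exp_neg_sq (y : ℝ) :
    ∫ t in Set.Ioi y, t * exp (-t ^ 2) = exp (-y ^ 2) / 2 := by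
  have hderiv (t : ℝ) : HasDerivAt (fun t ↦ -(exp (-t ^ 2) / 2)) (t * exp (-t ^ 2)) t :=
    ((hasDerivAt_pow 2 t).fun_neg.exp.div_const 2).fun_neg.congr_deriv (by norm_num; ring)
  have hlim : Tendsto (fun t : ℝ ↦ -(exp (-t ^ 2) / 2)) atTop (nhds 0) := by
    simpa using ((tendsto_exp_atBot.comp
      (tendsto_neg_atTop_atBot.comp (tendsto_pow_atTop two_ne_zero))).div_const 2).neg
  rw [integral_Ioi_of_hasDerivAt_of_tendsto' (fun t _ ↦ hderiv t)
    integrable_mul_exp_neg_sq.integrableOn hlim]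
  ring

lemma gaussTail_antitone : Antitone gaussTail := fun _ _ hab ↦
  setIntegral_mono_set integrable_exp_neg_sq.integrableOn
    (Eventually.of_forall fun _ ↦ (exp_pos _).le) (Set.Ioi_subset_Ioi hab).eventuallyLE

lemma gaussTail_le {y : ℝ} (hy : 0 < y) : gaussTail y ≤ exp (-y ^ 2) / (2 * y) := by
  have hle : gaussTail y ≤ ∫ t in Set.Ioi y, t * exp (-t ^ 2) / y := by
    refine setIntegral_mono_on integrable_exp_neg_sq.integrableOn
      (integrable_mul_exp_neg_sq.div_const y).integrableOn measurableSet_Ioi fun t ht ↦ ?_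
    rw [le_div_iff₀ hy, mul_comm t]
    exact mul_le_mul_of_nonneg_left (le_of_lt ht) (exp_pos _).le
  rwa [integral_div, integral_Ioi_mul_exp_neg_sq, div_div] at hle

/-- Compare with `e^{-t²} ≥ e^{-y²-2}` on an interval of length `1/(2y)` to the right of `y`. -/
lemma le_gaussTail {y : ℝ} (hy : 1 ≤ y) : exp (-y ^ 2 - 2) / (2 * y) ≤ gaussTail y := by
  have hy0 : 0 < y := one_pos.trans_le hy
  set δ := 1 / (2 * y) with hδ
  have hδy : 2 * y * δ = 1 := by rw [hδ]; field_simp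
  have hδ1 : δ ≤ 1 := by rw [hδ, div_le_one (by positivity)]; linarith
  have hδ0 : 0 < δ := by positivity
  have hbound : ∀ t ∈ Set.Ioc y (y + δ), exp (-y ^ 2 - 2) ≤ exp (-t ^ 2) := by
    rintro t ⟨hyt, hty⟩
    rw [exp_le_exp]
    nlinarith
  calc exp (-y ^ 2 - 2) / (2 * y) = exp (-y ^ 2 - 2) * volume.real (Set.Ioc y (y + δ)) := by
        rw [Real.volume_real_Ioc_of_le (by linarith), add_sub_cancel_left, hδ, mul_one_div]
    _ ≤ ∫ t in Set.Ioc y (y + δ), exp (-t ^ 2) :=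
        setIntegral_ge_of_const_le_real measurableSet_Ioc measure_Ioc_lt_top.ne hbound
          integrable_exp_neg_sq.integrableOn
    _ ≤ gaussTail y :=
        setIntegral_mono_set integrable_exp_neg_sq.integrableOn
          (Eventually.of_forall fun _ ↦ (exp_pos _).le) Set.Ioc_subset_Ioi_self.eventuallyLE

lemma gaussTail_pos (y : ℝ) : 0 < gaussTail y :=
  (by positivity : 0 < exp (-max y 1 ^ 2 - 2) / (2 * max y 1)).trans_le
    ((le_gaussTail (le_max_right y 1)).trans (gaussTail_antitone (le_max_left y 1)))

lemma sqrt_pi_mul_erfc (y : ℝ) : √π * erfc y = 2 * gaussTail y := by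
  rw [erfc, gaussTail]
  field_simp

lemma sqrt_pi_mul_erfc_le {y : ℝ} (hy : 0 < y) : √π * erfc y ≤ exp (-y ^ 2) / y :=
  calc √π * erfc y = 2 * gaussTail y := sqrt_pi_mul_erfc y
    _ ≤ 2 * (exp (-y ^ 2) / (2 * y)) := by gcongr; exact gaussTail_le hy
    _ = exp (-y ^ 2) / y := by field_simp

lemma le_sqrt_pi_mul_erfc {y : ℝ} (hy : 1 ≤ y) : exp (-y ^ 2 - 2) / y ≤ √π * erfc y :=
  calc exp (-y ^ 2 - 2) / y = 2 * (exp (-y ^ 2 - 2) / (2 * y)) := by field_simp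
    _ ≤ 2 * gaussTail y := by gcongr; exact le_gaussTail hy
    _ = √π * erfc y := (sqrt_pi_mul_erfc y).symm

lemma erfc_pos (y : ℝ) : 0 < erfc y :=
  mul_pos (by positivity) (gaussTail_pos y)

lemma erfc_antitone : Antitone erfc := fun _ _ hab ↦
  mul_le_mul_of_nonneg_left (gaussTail_antitone hab) (by positivity)

lemma exp_neg_add_sq_div (x y c : ℝ) :
    exp (-(y + x) ^ 2) / (exp (-y ^ 2 - c) / y) = y * exp (-(2 * x * y) - x ^ 2 + c) := by
  rw [div_div_eq_mul_div, mul_comm, mul_div_assoc, ← exp_sub]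
  congr 2
  ring

noncomputable def rhoIntegrand (x y : ℝ) : ℝ := exp (-(y + x) ^ 2) / (√π * erfc y)

lemma rhoIntegrand_nonneg (x y : ℝ) : 0 ≤ rhoIntegrand x y :=
  div_nonneg (exp_pos _).le (mul_pos (sqrt_pos.2 pi_pos) (erfc_pos y)).le

lemma measurable_rhoIntegrand (x : ℝ) : Measurable (rhoIntegrand x) :=
  (measurable_id.add_const x).pow_const 2 |>.neg.exp.div
    (measurable_const.mul erfc_antitone.measurable)

lemma rhoIntegrand_le_of_le_one (x : ℝ) {y : ℝ} (hy : y ≤ 1) :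
    rhoIntegrand x y ≤ exp (-(y + x) ^ 2) / (√π * erfc 1) :=
  div_le_div_of_nonneg_left (exp_pos _).le (mul_pos (sqrt_pos.2 pi_pos) (erfc_pos 1))
    (mul_le_mul_of_nonneg_left (erfc_antitone hy) (sqrt_nonneg π))

lemma rhoIntegrand_le_of_one_le {x y : ℝ} (hx : 0 < x) (hy : 1 ≤ y) :
    rhoIntegrand x y ≤ exp 1 / x * exp (-x * y) := by
  have hy0 : 0 < y := one_pos.trans_le hy
  have hmul : y * exp (-(x * y)) ≤ exp (-1) / x := by
    rw [le_div_iff₀ hx]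
    linarith [mul_exp_neg_le_exp_neg_one (x * y)]
  calc rhoIntegrand x y ≤ exp (-(y + x) ^ 2) / (exp (-y ^ 2 - 2) / y) :=
        div_le_div_of_nonneg_left (exp_pos _).le (by positivity) (le_sqrt_pi_mul_erfc hy)
    _ = y * exp (-(2 * x * y) - x ^ 2 + 2) := exp_neg_add_sq_div x y 2
    _ ≤ y * exp (-(x * y)) * (exp 2 * exp (-x * y)) := by
        rw [mul_assoc y, ← exp_add, ← exp_add]
        gcongr y * exp ?_
        nlinarith
    _ ≤ exp (-1) / x * (exp 2 * exp (-x * y)) := by gcongr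
    _ = exp 1 / x * exp (-x * y) := by
        rw [← mul_assoc, div_mul_eq_mul_div, ← exp_add]
        norm_num

lemma integrable_rhoIntegrand {x : ℝ} (hx : 0 < x) : Integrable (rhoIntegrand x) := by
  rw [← integrableOn_univ, ← Set.Iic_union_Ioi (a := (1 : ℝ)), integrableOn_union]
  constructor
  · refine Integrable.mono'
      ((integrable_exp_neg_sq.comp_add_right x).div_const (√π * erfc 1)).integrableOn
      (measurable_rhoIntegrand x).aestronglyMeasurable.restrict ?_
    refine (ae_restrict_iff' measurableSet_Iic).2 (Eventually.of_forall fun y hy ↦ ?_)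
    rw [norm_of_nonneg (rhoIntegrand_nonneg x y)]
    exact rhoIntegrand_le_of_le_one x hy
  · refine Integrable.mono' ((exp_neg_integrableOn_Ioi 1 hx).const_mul (exp 1 / x))
      (measurable_rhoIntegrand x).aestronglyMeasurable.restrict ?_
    refine (ae_restrict_iff' measurableSet_Ioi).2 (Eventually.of_forall fun y hy ↦ ?_)
    rw [norm_of_nonneg (rhoIntegrand_nonneg x y)]
    exact rhoIntegrand_le_of_one_le hx (le_of_lt hy)

lemma exp_neg_three_le_rhoIntegrand {x y : ℝ} (hx : 0 < x) (hx1 : x ≤ 1) (hy : 1 ≤ y)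
    (hxy : x * y ≤ 1) : exp (-3) ≤ rhoIntegrand x y := by
  have hy0 : 0 < y := one_pos.trans_le hy
  have hratio := exp_neg_add_sq_div x y 0
  rw [sub_zero, add_zero] at hratio
  calc exp (-3) = 1 * exp (-3) := (one_mul _).symm
    _ ≤ y * exp (-(2 * x * y) - x ^ 2) :=
        mul_le_mul hy (exp_le_exp.2 (by nlinarith)) (exp_pos _).le hy0.le
    _ = exp (-(y + x) ^ 2) / (exp (-y ^ 2) / y) := hratio.symm
    _ ≤ rhoIntegrand x y :=
        div_le_div_of_nonneg_left (exp_pos _).le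
          (mul_pos (sqrt_pos.2 pi_pos) (erfc_pos y)) (sqrt_pi_mul_erfc_le hy0)

lemma rhoProfile_ge {x : ℝ} (hx : 0 < x) (hx1 : x ≤ 1) :
    (x⁻¹ - 1) * exp (-3) ≤ rhoProfile x := by
  have hx1' : 1 ≤ x⁻¹ := one_le_inv₀ hx |>.2 hx1
  calc (x⁻¹ - 1) * exp (-3) = exp (-3) * volume.real (Set.Icc 1 x⁻¹) := by
        rw [Real.volume_real_Icc_of_le hx1', mul_comm]
    _ ≤ ∫ y in Set.Icc 1 x⁻¹, rhoIntegrand x y :=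
        setIntegral_ge_of_const_le_real measurableSet_Icc measure_Icc_lt_top.ne
          (fun y hy ↦ exp_neg_three_le_rhoIntegrand hx hx1 hy.1
            ((mul_le_mul_of_nonneg_left hy.2 hx.le).trans_eq (mul_inv_cancel₀ hx.ne')))
          (integrable_rhoIntegrand hx).integrableOn
    _ ≤ rhoProfile x :=
        setIntegral_le_integral (integrable_rhoIntegrand hx)
          (Eventually.of_forall (rhoIntegrand_nonneg x))

end RhoProfile

theorem rhoProfile_tendsto_atTop_at_zero :
    Tendsto rhoProfile (nhdsWithin 0 (Set.Ioi 0)) atTop := by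
  have hlower : Tendsto (fun x : ℝ ↦ (x⁻¹ - 1) * exp (-3)) (nhdsWithin 0 (Set.Ioi 0)) atTop :=
    (tendsto_atTop_add_const_right _ (-1) tendsto_inv_nhdsGT_zero).atTop_mul_const (exp_pos _)
  refine tendsto_atTop_mono' _ ?_ hlower
  filter_upwards [Ioc_mem_nhdsGT (zero_lt_one' ℝ)] with x hx
  exact RhoProfile.rhoProfile_ge hx.1 hx.2
end

section
/- Define Φ(z) := (1/√(2π)) ∫_{−∞}^{∞} e^{−(z−t)²/2} / ( (1/2) erfc(t/√2) ) dt for Re z < 0. Then the integral converges absolutely for every z with Re z < 0, Φ is analytic on the left half-plane, Φ(x) → 1 as x → −∞ along the real axis, and Φ(x) → +∞ as x → 0⁻ along the real axis. -/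
open Real MeasureTheory Filter Complex

/-- The universal semi-hard edge profile function
`Φ(z) = (1/√(2π)) ∫ℝ e^{-(z-t)²/2} / ((1/2) erfc(t/√2)) dt`. -/
noncomputable def PhiProfile (z : ℂ) : ℂ :=
  (1 / Real.sqrt (2 * π)) *
    ∫ t : ℝ, Complex.exp (-(z - t) ^ 2 / 2) / ((erfc (t / Real.sqrt 2) / 2 : ℝ) : ℂ)

/-!
Write `φ` for the standard Gaussian density and `Q t = erfc (t / √2) / 2 = ∫_t^∞ φ` for its tail.
Since `e^{-(z-t)²/2} / √(2π) = e^{-z²/2} e^{zt} φ(t)`, we have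
`Φ(z) = e^{-z²/2} ∫ e^{zt} (φ/Q)(t) dt`: up to an entire factor, `Φ` is the complex moment
generating function of the measure whose density is the inverse Mills ratio `φ/Q`.
As `Q ≥ 1/2` on `t ≤ 0` and `Q t ≥ η φ(t+η)` on `t ≥ 0`, we get `φ/Q ≤ 2φ` on the left and
`φ/Q ≲ e^{ηt}` on the right for every `η > 0`, so this generating function is finite, hence
analytic, on `Re z < 0`.
On the real axis, `Φ(x) = ∫ φ(s) / Q(s+x) ds`, which tends to `∫ φ = 1` by dominated convergence
as `Q → 1` at `-∞`. The Chernoff bound `Q t ≤ e^{-t²/2}` gives `φ/Q ≥ 1/√(2π)` on `t ≥ 0`,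
hence `Φ(x) ≥ e^{-x²/2} ∫_0^∞ e^{xt} dt / √(2π)`, which blows up like `1/|x|`.
-/

open ProbabilityTheory Set

noncomputable def normalTail (t : ℝ) : ℝ := ∫ s in Ioi t, gaussianPDFReal 0 1 s

lemma gaussianPDFReal_zero_one (s : ℝ) :
    gaussianPDFReal 0 1 s = (√(2 * π))⁻¹ * rexp (-s ^ 2 / 2) := by
  simp [gaussianPDFReal]

lemma erfc_div_sqrt_two_div_two (t : ℝ) : erfc (t / √2) / 2 = normalTail t := by
  have hsub := integral_comp_mul_left_Ioi (fun u => rexp (-u ^ 2)) t (b := (√2)⁻¹) (by positivity)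
  have hsq (s : ℝ) : ((√2)⁻¹ * s) ^ 2 = s ^ 2 / 2 := by
    rw [mul_pow, inv_pow, sq_sqrt zero_le_two]; ring
  simp only [hsq, smul_eq_mul, inv_inv] at hsub
  simp only [normalTail, gaussianPDFReal_zero_one, integral_const_mul, erfc, neg_div]
  rw [hsub, sqrt_mul zero_le_two, ← div_eq_inv_mul]
  field_simp

lemma normalTail_pos (t : ℝ) : 0 < normalTail t := by
  rw [normalTail, setIntegral_pos_iff_support_of_nonneg_ae
    (ae_of_all _ (gaussianPDFReal_nonneg 0 1)) (integrable_gaussianPDFReal 0 1).integrableOn,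
    Function.support_eq_univ fun s => (gaussianPDFReal_pos 0 1 s one_ne_zero).ne', univ_inter]
  simp

lemma antitone_normalTail : Antitone normalTail := fun _ _ hab =>
  setIntegral_mono_set (integrable_gaussianPDFReal 0 1).integrableOn
    (ae_of_all _ (gaussianPDFReal_nonneg 0 1)) (Ioi_subset_Ioi hab).eventuallyLE

lemma normalTail_zero : normalTail 0 = 1 / 2 := by
  have h := integral_gaussian_Ioi (1 / 2)
  simp only [normalTail, gaussianPDFReal_zero_one, integral_const_mul, neg_div]
  simp_rw [div_eq_inv_mul (_ ^ 2), ← neg_mul, ← one_div, h, div_div_eq_mul_div, div_one]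
  field_simp

lemma half_le_normalTail {t : ℝ} (ht : t ≤ 0) : 1 / 2 ≤ normalTail t :=
  normalTail_zero ▸ antitone_normalTail ht

lemma tendsto_normalTail_atBot : Tendsto normalTail atBot (nhds 1) := by
  change Tendsto (fun t => ∫ s in Ioi t, gaussianPDFReal 0 1 s) _ _
  have h := tendsto_setIntegral_of_monotone (μ := volume) (f := gaussianPDFReal 0 1)
    (s := fun i : ℝ => Ioi (-i)) (fun _ => measurableSet_Ioi)
    (fun _ _ hij => Ioi_subset_Ioi (neg_le_neg hij))
    (integrable_gaussianPDFReal 0 1).integrableOn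
  rw [iUnion_eq_univ_iff.mpr fun s => ⟨1 - s, by simp⟩, setIntegral_univ,
    integral_gaussianPDFReal_eq_one 0 one_ne_zero] at h
  simpa [Function.comp_def] using h.comp tendsto_neg_atBot_atTop

lemma gaussianPDFReal_le_of_sq_le {s t : ℝ} (h : t ^ 2 ≤ s ^ 2) :
    gaussianPDFReal 0 1 s ≤ gaussianPDFReal 0 1 t := by
  simp only [gaussianPDFReal_zero_one]
  gcongr

lemma exp_mul_gaussianPDFReal (x t : ℝ) :
    rexp (x * t) * gaussianPDFReal 0 1 t = rexp (x ^ 2 / 2) * gaussianPDFReal 0 1 (t - x) := by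
  simp only [gaussianPDFReal_zero_one]
  rw [mul_left_comm, ← Real.exp_add, mul_left_comm, ← Real.exp_add]
  ring_nf

lemma normalTail_le_exp {t : ℝ} (ht : 0 ≤ t) : normalTail t ≤ rexp (-t ^ 2 / 2) := by
  have hint : Integrable fun s => rexp (-t ^ 2 / 2) * gaussianPDFReal 0 1 (s - t) :=
    ((integrable_gaussianPDFReal 0 1).comp_sub_right t).const_mul _
  calc normalTail t ≤ ∫ s in Ioi t, rexp (-t ^ 2 / 2) * gaussianPDFReal 0 1 (s - t) := by
        refine setIntegral_mono_on (integrable_gaussianPDFReal 0 1).integrableOn hint.integrableOn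
          measurableSet_Ioi fun s hs => ?_
        simp only [gaussianPDFReal_zero_one]
        rw [mul_left_comm, ← Real.exp_add]
        gcongr
        nlinarith [mem_Ioi.mp hs]
    _ ≤ ∫ s, rexp (-t ^ 2 / 2) * gaussianPDFReal 0 1 (s - t) :=
        setIntegral_le_integral hint
          (ae_of_all _ fun s => mul_nonneg (exp_pos _).le (gaussianPDFReal_nonneg 0 1 _))
    _ = rexp (-t ^ 2 / 2) := by
        rw [integral_const_mul, integral_sub_right_eq_self (gaussianPDFReal 0 1),
          integral_gaussianPDFReal_eq_one 0 one_ne_zero, mul_one]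

lemma mul_gaussianPDFReal_le_normalTail {t η : ℝ} (ht : 0 ≤ t) (hη : 0 < η) :
    η * gaussianPDFReal 0 1 (t + η) ≤ normalTail t := by
  calc η * gaussianPDFReal 0 1 (t + η)
      ≤ ∫ s in Ioc t (t + η), gaussianPDFReal 0 1 s := by
        have h := setIntegral_ge_of_const_le_real (μ := volume) measurableSet_Ioc
          measure_Ioc_lt_top.ne
          (fun s (hs : s ∈ Ioc t (t + η)) => gaussianPDFReal_le_of_sq_le (t := s) (s := t + η)
            (pow_le_pow_left₀ (ht.trans hs.1.le) hs.2 2))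
          (integrable_gaussianPDFReal 0 1).integrableOn
        rwa [Real.volume_real_Ioc_of_le (by linarith), add_sub_cancel_left, mul_comm] at h
    _ ≤ normalTail t :=
        setIntegral_mono_set (integrable_gaussianPDFReal 0 1).integrableOn
          (ae_of_all _ (gaussianPDFReal_nonneg 0 1)) Ioc_subset_Ioi_self.eventuallyLE

noncomputable def invMillsRatio (t : ℝ) : ℝ := gaussianPDFReal 0 1 t / normalTail t

lemma invMillsRatio_nonneg (t : ℝ) : 0 ≤ invMillsRatio t :=
  div_nonneg (gaussianPDFReal_nonneg 0 1 t) (normalTail_pos t).le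

lemma measurable_invMillsRatio : Measurable invMillsRatio :=
  (measurable_gaussianPDFReal 0 1).div antitone_normalTail.measurable

lemma invMillsRatio_le_of_nonpos {t : ℝ} (ht : t ≤ 0) :
    invMillsRatio t ≤ 2 * gaussianPDFReal 0 1 t := by
  calc invMillsRatio t ≤ gaussianPDFReal 0 1 t / (1 / 2) :=
        div_le_div_of_nonneg_left (gaussianPDFReal_nonneg 0 1 t) one_half_pos
          (half_le_normalTail ht)
    _ = 2 * gaussianPDFReal 0 1 t := by ring

lemma invMillsRatio_le_exp {t η : ℝ} (ht : 0 ≤ t) (hη : 0 < η) :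
    invMillsRatio t ≤ rexp (η ^ 2 / 2) / η * rexp (η * t) := by
  have hshift : gaussianPDFReal 0 1 t = rexp (η * t + η ^ 2 / 2) * gaussianPDFReal 0 1 (t + η) := by
    simp only [gaussianPDFReal_zero_one]
    rw [mul_left_comm, ← Real.exp_add]
    ring_nf
  calc invMillsRatio t ≤ gaussianPDFReal 0 1 t / (η * gaussianPDFReal 0 1 (t + η)) :=
        div_le_div_of_nonneg_left (gaussianPDFReal_nonneg 0 1 t)
          (mul_pos hη (gaussianPDFReal_pos 0 1 _ one_ne_zero))
          (mul_gaussianPDFReal_le_normalTail ht hη)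
    _ = rexp (η ^ 2 / 2) / η * rexp (η * t) := by
        rw [hshift, Real.exp_add]
        field_simp [(gaussianPDFReal_pos 0 1 (t + η) one_ne_zero).ne']

lemma inv_sqrt_two_pi_le_invMillsRatio {t : ℝ} (ht : 0 ≤ t) : (√(2 * π))⁻¹ ≤ invMillsRatio t := by
  rw [invMillsRatio, le_div_iff₀ (normalTail_pos t), gaussianPDFReal_zero_one]
  exact mul_le_mul_of_nonneg_left (normalTail_le_exp ht) (by positivity)

lemma integrable_invMillsRatio_mul_exp {x : ℝ} (hx : x < 0) :
    Integrable fun t => invMillsRatio t * rexp (x * t) := by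
  have hmeas : AEStronglyMeasurable (fun t => invMillsRatio t * rexp (x * t)) :=
    (measurable_invMillsRatio.mul (by fun_prop)).aestronglyMeasurable
  have hnorm (t : ℝ) : ‖invMillsRatio t * rexp (x * t)‖ = invMillsRatio t * rexp (x * t) :=
    Real.norm_of_nonneg (mul_nonneg (invMillsRatio_nonneg t) (exp_pos _).le)
  rw [← integrableOn_univ, ← Iic_union_Ioi (a := 0), integrableOn_union]
  constructor
  · have hg : Integrable fun t => 2 * (rexp (x ^ 2 / 2) * gaussianPDFReal 0 1 (t - x)) :=
      (((integrable_gaussianPDFReal 0 1).comp_sub_right x).const_mul _).const_mul _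
    refine hg.integrableOn.mono' hmeas.restrict (ae_restrict_of_forall_mem measurableSet_Iic
      fun t (ht : t ≤ 0) => ?_)
    rw [hnorm, ← exp_mul_gaussianPDFReal, mul_comm (rexp _), ← mul_assoc]
    exact mul_le_mul_of_nonneg_right (invMillsRatio_le_of_nonpos ht) (exp_pos _).le
  · have hg : IntegrableOn
        (fun t => rexp ((-x / 2) ^ 2 / 2) / (-x / 2) * rexp (x / 2 * t)) (Ioi 0) :=
      (integrableOn_exp_mul_Ioi (by linarith) 0).const_mul _
    refine hg.mono' hmeas.restrict (ae_restrict_of_forall_mem measurableSet_Ioi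
      fun t (ht : 0 < t) => ?_)
    calc ‖invMillsRatio t * rexp (x * t)‖
        ≤ rexp ((-x / 2) ^ 2 / 2) / (-x / 2) * rexp (-x / 2 * t) * rexp (x * t) := by
          rw [hnorm]
          exact mul_le_mul_of_nonneg_right (invMillsRatio_le_exp ht.le (by linarith)) (exp_pos _).le
      _ = rexp ((-x / 2) ^ 2 / 2) / (-x / 2) * rexp (x / 2 * t) := by
          rw [mul_assoc, ← Real.exp_add]
          ring_nf

noncomputable def invMillsMeasure : Measure ℝ :=
  volume.withDensity fun t => ENNReal.ofReal (invMillsRatio t)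

section invMillsMeasure

variable {E : Type*} [NormedAddCommGroup E] [NormedSpace ℝ E]

lemma integral_invMillsMeasure (g : ℝ → E) :
    ∫ t, g t ∂invMillsMeasure = ∫ t, invMillsRatio t • g t := by
  rw [invMillsMeasure, integral_withDensity_eq_integral_toReal_smul
    measurable_invMillsRatio.ennreal_ofReal (ae_of_all _ fun _ => ENNReal.ofReal_lt_top)]
  simp_rw [ENNReal.toReal_ofReal (invMillsRatio_nonneg _)]

lemma integrable_invMillsMeasure_iff {g : ℝ → E} :
    Integrable g invMillsMeasure ↔ Integrable fun t => invMillsRatio t • g t := by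
  rw [invMillsMeasure, integrable_withDensity_iff_integrable_smul'
    measurable_invMillsRatio.ennreal_ofReal (ae_of_all _ fun _ => ENNReal.ofReal_lt_top)]
  simp_rw [ENNReal.toReal_ofReal (invMillsRatio_nonneg _)]

end invMillsMeasure

lemma Iio_subset_integrableExpSet_invMillsMeasure : Iio 0 ⊆ integrableExpSet id invMillsMeasure :=
  fun _ hx => integrable_invMillsMeasure_iff.mpr (integrable_invMillsRatio_mul_exp hx)

lemma PhiProfile_integrand_eq (z : ℂ) (t : ℝ) :
    1 / (√(2 * π) : ℂ) * (cexp (-(z - t) ^ 2 / 2) / ((erfc (t / √2) / 2 : ℝ) : ℂ)) =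
      cexp (-z ^ 2 / 2) * (invMillsRatio t • cexp (z * t)) := by
  rw [erfc_div_sqrt_two_div_two, Complex.real_smul, invMillsRatio, gaussianPDFReal_zero_one,
    show -(z - t) ^ 2 / 2 = -z ^ 2 / 2 + (z * t + (-(t : ℝ) ^ 2 / 2 : ℝ)) by push_cast; ring,
    Complex.exp_add, Complex.exp_add, ← Complex.ofReal_exp]
  have := (normalTail_pos t).ne'
  push_cast
  field_simp

lemma PhiProfile_eq_mul_complexMGF (z : ℂ) :
    PhiProfile z = cexp (-z ^ 2 / 2) * complexMGF id invMillsMeasure z := by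
  rw [PhiProfile, ← integral_const_mul]
  simp_rw [PhiProfile_integrand_eq]
  rw [integral_const_mul, complexMGF, integral_invMillsMeasure]
  rfl

lemma integrable_PhiProfile_integrand {z : ℂ} (hz : z.re < 0) :
    Integrable fun t : ℝ => cexp (-(z - t) ^ 2 / 2) / ((erfc (t / √2) / 2 : ℝ) : ℂ) := by
  have hmgf := integrable_invMillsMeasure_iff.mp <| integrable_cexp_mul_of_re_mem_integrableExpSet
    aemeasurable_id (Iio_subset_integrableExpSet_invMillsMeasure hz)
  rw [← integrable_const_mul_iff
    (IsUnit.mk0 (1 / (√(2 * π) : ℂ)) (by simp [Real.sqrt_ne_zero', pi_pos]))]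
  simp_rw [PhiProfile_integrand_eq]
  exact hmgf.const_mul _

lemma analyticOn_PhiProfile : AnalyticOn ℂ PhiProfile {z | z.re < 0} := by
  have hsub : {z : ℂ | z.re < 0} ⊆ {z | z.re ∈ interior (integrableExpSet id invMillsMeasure)} :=
    fun _ hz => interior_maximal Iio_subset_integrableExpSet_invMillsMeasure isOpen_Iio hz
  rw [funext PhiProfile_eq_mul_complexMGF]
  have hexp : Differentiable ℂ fun z : ℂ => cexp (-z ^ 2 / 2) := by fun_prop
  exact AnalyticOn.mul (fun z _ => (hexp.analyticAt z).analyticWithinAt)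
    (analyticOn_complexMGF.mono hsub)

lemma PhiProfile_ofReal (x : ℝ) :
    PhiProfile x = ((rexp (-x ^ 2 / 2) * mgf id invMillsMeasure x : ℝ) : ℂ) := by
  rw [PhiProfile_eq_mul_complexMGF, complexMGF_ofReal]
  push_cast
  rfl

lemma gaussianPDFReal_div_normalTail_add (s x : ℝ) :
    gaussianPDFReal 0 1 s / normalTail (s + x) =
      rexp (-x ^ 2 / 2) * (invMillsRatio (s + x) * rexp (x * (s + x))) := by
  rw [invMillsRatio, div_mul_eq_mul_div, mul_comm (gaussianPDFReal 0 1 _),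
    exp_mul_gaussianPDFReal, add_sub_cancel_right, ← mul_div_assoc, ← mul_assoc, ← Real.exp_add,
    neg_div, neg_add_cancel, Real.exp_zero, one_mul]

lemma integrable_gaussianPDFReal_div_normalTail_add {x : ℝ} (hx : x < 0) :
    Integrable fun s => gaussianPDFReal 0 1 s / normalTail (s + x) := by
  simp_rw [gaussianPDFReal_div_normalTail_add]
  exact ((integrable_invMillsRatio_mul_exp hx).comp_add_right x).const_mul _

lemma exp_mul_mgf_invMillsMeasure (x : ℝ) :
    rexp (-x ^ 2 / 2) * mgf id invMillsMeasure x =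
      ∫ s, gaussianPDFReal 0 1 s / normalTail (s + x) := by
  simp_rw [gaussianPDFReal_div_normalTail_add]
  rw [integral_add_right_eq_self (fun t => rexp (-x ^ 2 / 2) * (invMillsRatio t * rexp (x * t))),
    integral_const_mul, mgf, integral_invMillsMeasure]
  rfl

lemma tendsto_integral_gaussianPDFReal_div_normalTail_add :
    Tendsto (fun x => ∫ s, gaussianPDFReal 0 1 s / normalTail (s + x)) atBot (nhds 1) := by
  rw [← integral_gaussianPDFReal_eq_one 0 one_ne_zero]
  refine tendsto_integral_filter_of_dominated_convergence
    (fun s => gaussianPDFReal 0 1 s / normalTail (s + -1)) ?_ ?_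
    (integrable_gaussianPDFReal_div_normalTail_add (by norm_num)) ?_
  · filter_upwards [eventually_lt_atBot 0] with x hx
    exact (integrable_gaussianPDFReal_div_normalTail_add hx).aestronglyMeasurable
  · filter_upwards [eventually_le_atBot (-1)] with x hx
    refine ae_of_all _ fun s => ?_
    rw [norm_of_nonneg (div_nonneg (gaussianPDFReal_nonneg 0 1 s) (normalTail_pos _).le)]
    exact div_le_div_of_nonneg_left (gaussianPDFReal_nonneg 0 1 s) (normalTail_pos _)
      (antitone_normalTail (by linarith))
  · refine ae_of_all _ fun s => ?_
    simpa [Function.comp_def, Pi.div_def] using tendsto_const_nhds.div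
      (tendsto_normalTail_atBot.comp (tendsto_atBot_add_const_left _ s tendsto_id)) one_ne_zero

lemma tendsto_PhiProfile_atBot : Tendsto (fun x : ℝ => PhiProfile x) atBot (nhds 1) := by
  simp_rw [PhiProfile_ofReal, exp_mul_mgf_invMillsMeasure]
  exact_mod_cast tendsto_integral_gaussianPDFReal_div_normalTail_add.ofReal

lemma inv_le_mgf_invMillsMeasure {x : ℝ} (hx : x < 0) :
    (√(2 * π))⁻¹ * (-x)⁻¹ ≤ mgf id invMillsMeasure x := by
  have hint := integrable_invMillsRatio_mul_exp hx
  calc (√(2 * π))⁻¹ * (-x)⁻¹ = ∫ t in Ioi 0, (√(2 * π))⁻¹ * rexp (x * t) := by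
        rw [integral_const_mul, integral_exp_mul_Ioi hx, mul_zero, Real.exp_zero, neg_div,
          ← div_neg, one_div]
    _ ≤ ∫ t in Ioi 0, invMillsRatio t * rexp (x * t) :=
        setIntegral_mono_on ((integrableOn_exp_mul_Ioi hx 0).const_mul _) hint.integrableOn
          measurableSet_Ioi fun t ht => mul_le_mul_of_nonneg_right
            (inv_sqrt_two_pi_le_invMillsRatio (le_of_lt ht)) (exp_pos _).le
    _ ≤ ∫ t, invMillsRatio t * rexp (x * t) := setIntegral_le_integral hint
        (ae_of_all _ fun t => mul_nonneg (invMillsRatio_nonneg t) (exp_pos _).le)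
    _ = mgf id invMillsMeasure x := by rw [mgf, integral_invMillsMeasure]; rfl

lemma tendsto_norm_PhiProfile_nhdsLT_zero :
    Tendsto (fun x : ℝ => ‖PhiProfile x‖) (nhdsWithin 0 (Iio 0)) atTop := by
  have hlow : ∀ x ∈ Iio (0 : ℝ),
      rexp (-x ^ 2 / 2) * (√(2 * π))⁻¹ * (-x)⁻¹ ≤ ‖PhiProfile x‖ := fun x hx => by
    rw [PhiProfile_ofReal, Complex.norm_real,
      norm_of_nonneg (mul_nonneg (exp_pos _).le mgf_nonneg), mul_assoc]
    exact mul_le_mul_of_nonneg_left (inv_le_mgf_invMillsMeasure hx) (exp_pos _).le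
  have hexp : Tendsto (fun x : ℝ => rexp (-x ^ 2 / 2) * (√(2 * π))⁻¹) (nhdsWithin 0 (Iio 0))
      (nhds (rexp (-0 ^ 2 / 2) * (√(2 * π))⁻¹)) :=
    ((Continuous.tendsto (f := fun x : ℝ => rexp (-x ^ 2 / 2)) (by fun_prop) 0).mul_const
      _).mono_left nhdsWithin_le_nhds
  have hinv : Tendsto (fun x : ℝ => (-x)⁻¹) (nhdsWithin 0 (Iio 0)) atTop :=
    (tendsto_neg_atBot_atTop.comp tendsto_inv_nhdsLT_zero).congr fun _ => inv_neg.symm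
  exact tendsto_atTop_mono' _ (eventually_nhdsWithin_of_forall hlow)
    (hexp.pos_mul_atTop (by positivity) hinv)

theorem PhiProfile_properties :
    (∀ z : ℂ, z.re < 0 →
      Integrable (fun t : ℝ =>
        Complex.exp (-(z - t) ^ 2 / 2) / ((erfc (t / Real.sqrt 2) / 2 : ℝ) : ℂ))) ∧
    AnalyticOn ℂ PhiProfile {z : ℂ | z.re < 0} ∧
    Tendsto (fun x : ℝ => PhiProfile x) atBot (nhds 1) ∧
    Tendsto (fun x : ℝ => ‖PhiProfile x‖) (nhdsWithin 0 (Set.Iio 0)) atTop :=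
  ⟨fun _ hz => integrable_PhiProfile_integrand hz, analyticOn_PhiProfile, tendsto_PhiProfile_atBot,
    tendsto_norm_PhiProfile_nhdsLT_zero⟩
end
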